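/- Let Φ be a root system with positive roots Φ⁺, and let α, β ∈ Φ⁺ be such that γ := β − α is a nonzero sum of positive roots that is not itself a root, i.e. β = α + γ ∈ Φ⁺ and γ ∈ ℕΦ⁺ \ Φ. Then (γ, α) ≤ −(α, α) < 0, where (−,−) is a W-invariant inner product. In particular some positive root summand α₁ of γ satisfies (α₁, α) < 0, hence α + α₁ ∈ Φ⁺. -/
import Mathlib

open scoped RealInnerProductSpace

/-- A reduced crystallographic root system in a real inner product space,
together with a choice of positive system. -/
structure RootSystemData (V : Type*) [NormedAddCommGroup V] [InnerProductSpace ℝ V] where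
  Φ : Set V
  pos : Set V
  finite : Φ.Finite
  ne_zero : ∀ α ∈ Φ, α ≠ (0 : V)
  neg_mem : ∀ α ∈ Φ, -α ∈ Φ
  reduced : ∀ α ∈ Φ, ∀ c : ℝ, c • α ∈ Φ → c = 1 ∨ c = -1
  crystallographic : ∀ α ∈ Φ, ∀ β ∈ Φ, ∃ n : ℤ, (n : ℝ) = 2 * ⟪β, α⟫ / ⟪α, α⟫
  reflect_mem : ∀ α ∈ Φ, ∀ β ∈ Φ, β - (2 * ⟪β, α⟫ / ⟪α, α⟫) • α ∈ Φ
  pos_subset : pos ⊆ Φ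
  pos_iff : ∀ α ∈ Φ, (α ∈ pos ↔ -α ∉ pos)
  pos_add : ∀ α ∈ pos, ∀ β ∈ pos, α + β ∈ Φ → α + β ∈ pos

variable {V : Type*} [NormedAddCommGroup V] [InnerProductSpace ℝ V]

lemma inner_self_pos' {x : V} (hx : x ≠ 0) : 0 < ⟪x, x⟫ :=
  lt_of_le_of_ne real_inner_self_nonneg (Ne.symm (inner_self_ne_zero.mpr hx))

lemma key_sub_mem (R : RootSystemData V) {α β : V} (hα : α ∈ R.Φ) (hβ : β ∈ R.Φ)
    (h : 0 < ⟪β, α⟫) : β = α ∨ β - α ∈ R.Φ := by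
  obtain ⟨m, hm⟩ := R.crystallographic α hα β hβ
  obtain ⟨n, hn⟩ := R.crystallographic β hβ α hα
  have hαα : 0 < ⟪α, α⟫ := inner_self_pos' (R.ne_zero α hα)
  have hββ : 0 < ⟪β, β⟫ := inner_self_pos' (R.ne_zero β hβ)
  have hc : ⟪α, β⟫ = ⟪β, α⟫ := real_inner_comm β α
  have hm0 : 0 < m := by
    have : (0:ℝ) < (m:ℝ) := by rw [hm]; positivity
    exact_mod_cast this
  have hn0 : 0 < n := by
    have : (0:ℝ) < (n:ℝ) := by rw [hn, hc]; positivity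
    exact_mod_cast this
  by_cases hm1 : m = 1
  · right
    have h1 : 2 * ⟪β, α⟫ / ⟪α, α⟫ = 1 := by rw [← hm, hm1]; norm_num
    have := R.reflect_mem α hα β hβ
    rwa [h1, one_smul] at this
  by_cases hn1 : n = 1
  · right
    have h1 : 2 * ⟪α, β⟫ / ⟪β, β⟫ = 1 := by rw [← hn, hn1]; norm_num
    have h2 := R.reflect_mem β hβ α hα
    rw [h1, one_smul] at h2
    have := R.neg_mem _ h2
    rwa [neg_sub] at this
  · left
    have hCS : ⟪β, α⟫ * ⟪β, α⟫ ≤ ⟪β, β⟫ * ⟪α, α⟫ := real_inner_mul_inner_self_le β α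
    have hmnR : (m:ℝ) * (n:ℝ) ≤ 4 := by
      rw [hm, hn, hc, div_mul_div_comm]
      rw [div_le_iff₀ (by positivity)]
      nlinarith
    have hmn : m * n ≤ 4 := by exact_mod_cast hmnR
    have hm2 : 2 ≤ m := by omega
    have hn2 : 2 ≤ n := by omega
    have hsum : m + n ≤ 4 := by nlinarith [mul_nonneg (by omega : (0:ℤ) ≤ m - 2) (by omega : (0:ℤ) ≤ n - 2)]
    have hm2' : m = 2 := by omega
    have hn2' : n = 2 := by omega
    have e1 : ⟪β, α⟫ = ⟪α, α⟫ := by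
      have : (2:ℝ) = 2 * ⟪β, α⟫ / ⟪α, α⟫ := by rw [← hm, hm2']; norm_num
      field_simp at this; linarith
    have e2 : ⟪β, α⟫ = ⟪β, β⟫ := by
      have : (2:ℝ) = 2 * ⟪α, β⟫ / ⟪β, β⟫ := by rw [← hn, hn2']; norm_num
      rw [hc] at this
      field_simp at this; linarith
    have hz : ⟪β - α, β - α⟫ = 0 := by
      have := real_inner_sub_sub_self β α
      rw [this]; linarith
    have := inner_self_eq_zero (𝕜 := ℝ).mp hz
    exact sub_eq_zero.mp this

theorem inner_le_neg_of_nonroot_sum (R : RootSystemData V) (α β : V)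
    (hα : α ∈ R.pos) (hβ : β ∈ R.pos)
    (hγsum : β - α ∈ AddSubmonoid.closure R.pos)
    (hγne : β - α ≠ 0) (hγnotroot : β - α ∉ R.Φ) :
    ⟪β - α, α⟫ ≤ -⟪α, α⟫ ∧ -⟪α, α⟫ < 0 ∧
      ∀ l : List V, (∀ x ∈ l, x ∈ R.pos) → l.sum = β - α →
        ∃ α₁ ∈ l, ⟪α₁, α⟫ < 0 ∧ α + α₁ ∈ R.pos := by
  have hαΦ : α ∈ R.Φ := R.pos_subset hα
  have hβΦ : β ∈ R.Φ := R.pos_subset hβ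
  have hαα : 0 < ⟪α, α⟫ := inner_self_pos' (R.ne_zero α hαΦ)
  have hba : ⟪β, α⟫ ≤ 0 := by
    by_contra h
    push_neg at h
    rcases key_sub_mem R hαΦ hβΦ h with h' | h'
    · exact hγne (by rw [h', sub_self])
    · exact hγnotroot h'
  have h1 : ⟪β - α, α⟫ ≤ -⟪α, α⟫ := by
    rw [inner_sub_left]; linarith
  refine ⟨h1, by linarith, ?_⟩
  intro l hl hsum
  have hneg : ⟪l.sum, α⟫ < 0 := by rw [hsum]; linarith
  have : ∃ α₁ ∈ l, ⟪α₁, α⟫ < 0 := by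
    by_contra hall
    push_neg at hall
    have : (0:ℝ) ≤ ⟪l.sum, α⟫ := by
      clear hneg hsum
      induction l with
      | nil => simp
      | cons a t ih =>
        rw [List.sum_cons, inner_add_left]
        have h1 := hall a (by simp)
        have h2 : (0:ℝ) ≤ ⟪t.sum, α⟫ := by
          apply ih (fun x hx => hl x (by simp [hx])) (fun x hx => hall x (by simp [hx]))
        linarith
    linarith
  obtain ⟨α₁, hmem, hlt⟩ := this
  have hα₁pos : α₁ ∈ R.pos := hl α₁ hmem
  have hα₁Φ : α₁ ∈ R.Φ := R.pos_subset hα₁pos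
  have hnegΦ : -α₁ ∈ R.Φ := R.neg_mem _ hα₁Φ
  have hinner : 0 < ⟪α, -α₁⟫ := by
    rw [inner_neg_right, real_inner_comm]; linarith
  rcases key_sub_mem R hnegΦ hαΦ hinner with h' | h'
  · exfalso
    have : -α₁ ∈ R.pos := h' ▸ hα
    exact (R.pos_iff α₁ hα₁Φ).mp hα₁pos this
  · have hsubΦ : α + α₁ ∈ R.Φ := by rwa [sub_neg_eq_add] at h'
    exact ⟨α₁, hmem, hlt, R.pos_add α hα α₁ hα₁pos hsubΦ⟩
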